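/- Let X be a CAT(0) cube complex, ṽ a vertex and H a hyperplane with d(ṽ, H) ≥ 3/2. Then there exists a hyperplane H' with d(ṽ, H') = 1/2 such that H' separates ṽ from H (i.e., ṽ and H lie in different halfspaces of H'). -/

import Mathlib

/-!
In a median graph (the 1-skeleton of a CAT(0) cube complex) opposite edges of a square split the
vertices into the same two halfspaces: otherwise the two vertices of the square nearest to a test
vertex would be two distinct medians. Moving an edge dual to `H` towards `(a, b)` square by square
shows that every edge dual to `H` splits the graph as `H` does, and this makes halfspaces convex.
By convexity the vertex `x₀` beyond `H` nearest to `ṽ` is a gate: `d(ṽ, y) = d(ṽ, x₀) + d(x₀, y)`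
for every `y` beyond `H`. Let `H'` be dual to the first edge `(ṽ, ṽ')` of a geodesic from `ṽ` to
`x₀`; it is at distance `1/2` from `ṽ`. The gate property puts everything beyond `H` on the far
side of `H'`, and the splitting property of dual edges puts the near endpoints of the edges dual
to `H` there as well. The bound `d(ṽ, H) ≥ 3/2` means `d(ṽ, x₀) ≥ 2`, which keeps `ṽ'` on the
side of `H` containing `ṽ`.
-/

/-- A combinatorial CAT(0) cube complex, presented by its 1-skeleton.
By the theorem of Chepoi and Roller, the 1-skeleta of CAT(0) cube complexes
(cube complexes that are simply connected and whose vertex links are flag,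
equivalently nonpositively curved in the sense of Gromov) are exactly the
median graphs, and a CAT(0) cube complex is determined by its 1-skeleton:
its cubes are exactly the induced subgraphs isomorphic to Boolean hypercubes. -/
structure CCC where
  V : Type
  graph : SimpleGraph V
  conn : graph.Connected
  median : ∀ x y z : V, ∃! m : V,
    graph.dist x m + graph.dist m y = graph.dist x y ∧
    graph.dist y m + graph.dist m z = graph.dist y z ∧
    graph.dist x m + graph.dist m z = graph.dist x z

namespace CCC

variable (X : CCC)

/-- An embedded `n`-dimensional cube of the cube complex: vertices of the
Boolean cube `{0,1}^n` mapped injectively onto vertices of `X`, with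
adjacency exactly between vertices differing in one coordinate. -/
def IsCubeEmb {n : ℕ} (c : (Fin n → Bool) → X.V) : Prop :=
  Function.Injective c ∧
    ∀ f g : Fin n → Bool,
      X.graph.Adj (c f) (c g) ↔ (Finset.univ.filter fun i => f i ≠ g i).card = 1

/-- `u` and `v` are diagonally opposite vertices of a cube of `X`. -/
def SpansCube (u v : X.V) : Prop :=
  ∃ (n : ℕ) (c : (Fin n → Bool) → X.V),
    X.IsCubeEmb c ∧ c (fun _ => false) = u ∧ c (fun _ => true) = v

/-- The (metric) interval between two vertices. For two vertices spanning a
cube, this is exactly the vertex set of the (minimal) cube containing both. -/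
def Interval (u v : X.V) : Set X.V :=
  {x | X.graph.dist u x + X.graph.dist x v = X.graph.dist u v}

/-- A set of vertices which is the vertex set of a cube of `X`. -/
def IsCubeSet (s : Set X.V) : Prop :=
  ∃ (n : ℕ) (c : (Fin n → Bool) → X.V), X.IsCubeEmb c ∧ s = Set.range c

/-- The star `St(C)` of the cube `C` spanned by `u` and `v`: the union of all
cubes containing `C` as a subface. -/
def StarCube (u v : X.V) : Set X.V :=
  ⋃₀ {s | X.IsCubeSet s ∧ X.Interval u v ⊆ s}

/-- The star of a vertex: the union of all cubes containing it. -/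
def StarV (v : X.V) : Set X.V := X.StarCube v v

/-- The (oriented) Djoković relation: the edges `(a,b)` and `(a',b')` are dual
to the same hyperplane, with `a` and `a'` on the same side of it. In a median
graph this is the relation "being opposite edges of a common square", extended
transitively (in median graphs the Djoković relation is already transitive). -/
def DjRel (a b a' b' : X.V) : Prop :=
  X.graph.Adj a b ∧ X.graph.Adj a' b' ∧
    X.graph.dist a a' + 1 = X.graph.dist a b' ∧
    X.graph.dist b b' + 1 = X.graph.dist b a'

/-- The edges `(a,b)` and `(a',b')` are dual to the same hyperplane
(unoriented version). -/
def UDual (a b a' b' : X.V) : Prop := X.DjRel a b a' b' ∨ X.DjRel a b b' a'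

/-- `x` lies in the halfspace of the hyperplane dual to the edge `(a,b)`
containing `a`. -/
def SideOf (a b x : X.V) : Prop := X.graph.dist x a < X.graph.dist x b

/-- The hyperplane dual to the edge `(a,b)` separates the vertices `x, y`. -/
def Separates (a b x y : X.V) : Prop :=
  (X.SideOf a b x ∧ X.SideOf b a y) ∨ (X.SideOf b a x ∧ X.SideOf a b y)

/-- The hyperplanes dual to the edges `(a,b)` and `(a',b')` cross, i.e. they
pass through a common cube: there is a square with one pair of opposite edges
dual to the first hyperplane and one adjacent pair dual to the second. -/
def Cross (a b a' b' : X.V) : Prop :=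
  ∃ w x y z : X.V,
    X.graph.Adj w x ∧ X.graph.Adj y z ∧ X.graph.Adj w y ∧ X.graph.Adj x z ∧
    X.UDual w x a b ∧ X.UDual w y a' b'

/-- The distance from the vertex `v` to the hyperplane `H` dual to the edge
`(a,b)`, assuming `v` lies on the `a`-side: `d(v,H) = hDist v a b + 1/2`,
where `hDist v a b = min { d(v,x) | x in the halfspace not containing v } - 1`.
Distances between vertices here are measured in the normal-cube-path metric;
for a CAT(0) cube complex this minimum is realized on `N(H)` and agrees with
the corresponding graph-metric computation. -/
noncomputable def hDist (v a b : X.V) : ℕ :=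
  sInf {n | ∃ x : X.V, X.SideOf b a x ∧ X.graph.dist v x = n} - 1

end CCC

namespace SimpleGraph

variable {V : Type*} {G : SimpleGraph V}

theorem Connected.dist_le_dist_add_one_of_adj (hG : G.Connected) {u v : V} (hadj : G.Adj u v)
    (w : V) : G.dist u w ≤ G.dist v w + 1 :=
  hG.dist_triangle.trans_eq (by rw [dist_eq_one_iff_adj.2 hadj, add_comm])

theorem Connected.exists_adj_dist_add_one_eq (hG : G.Connected) {u w : V} (h : u ≠ w) :
    ∃ r, G.Adj u r ∧ G.dist r w + 1 = G.dist u w := by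
  obtain ⟨p, hp⟩ := hG.exists_walk_length_eq_dist u w
  cases p with
  | nil => exact absurd rfl h
  | cons hadj q =>
    refine ⟨_, hadj, le_antisymm ?_ (hG.dist_le_dist_add_one_of_adj hadj w)⟩
    rw [← hp, Walk.length_cons]
    exact Nat.succ_le_succ (dist_le q)

end SimpleGraph

namespace CCC

open SimpleGraph

section

variable {X : CCC}

local notation "δ" => X.graph.dist

theorem dist_eq_dist_add_one_of_adj (u : X.V) {v w : X.V} (hadj : X.graph.Adj v w) :
    δ u v = δ u w + 1 ∨ δ u w = δ u v + 1 := by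
  obtain ⟨m, ⟨hv, hvw, hw⟩, -⟩ := X.median u v w
  have hvw1 : δ v w = 1 := dist_eq_one_iff_adj.2 hadj
  rcases (by omega : δ v m = 0 ∨ δ m w = 0) with h | h
  · obtain rfl := X.conn.dist_eq_zero_iff.1 h
    omega
  · obtain rfl := X.conn.dist_eq_zero_iff.1 h
    have : δ m v = 1 := dist_eq_one_iff_adj.2 hadj.symm
    omega

theorem sideOf_left {a b : X.V} (h : a ≠ b) : X.SideOf a b a := by
  show δ a a < δ a b
  rw [dist_self]
  exact X.conn.pos_dist_of_ne h

theorem SideOf.dist_eq {a b y : X.V} (hab : X.graph.Adj a b) (h : X.SideOf a b y) :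
    δ y b = δ y a + 1 := by
  have : δ y a < δ y b := h
  have := X.dist_eq_dist_add_one_of_adj y hab
  omega

theorem sideOf_or_sideOf {a b : X.V} (hab : X.graph.Adj a b) (y : X.V) :
    X.SideOf a b y ∨ X.SideOf b a y := by
  unfold SideOf
  have := X.dist_eq_dist_add_one_of_adj y hab
  omega

/-- The quadrangle condition of median graphs. -/
theorem exists_adj_adj_dist_add_one_eq {x y p : X.V} (hxy : δ x y = 2) (hp : δ x p = δ y p) :
    ∃ m, X.graph.Adj x m ∧ X.graph.Adj m y ∧ δ m p + 1 = δ x p := by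
  obtain ⟨m, ⟨hxm, hym, hpm⟩, -⟩ := X.median x y p
  have hxm0 : δ x m ≠ 0 := by
    intro h
    obtain rfl := X.conn.dist_eq_zero_iff.1 h
    obtain rfl := X.conn.dist_eq_zero_iff.1 (by omega : δ y x = 0)
    simp at hxy
  have hmy0 : δ m y ≠ 0 := by
    intro h
    obtain rfl := X.conn.dist_eq_zero_iff.1 h
    omega
  exact ⟨m, dist_eq_one_iff_adj.1 (by omega), dist_eq_one_iff_adj.1 (by omega), by omega⟩

theorem sideOf_of_square {x z z' x' : X.V} (hxz : X.graph.Adj x z) (hzz' : X.graph.Adj z z')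
    (hz'x' : X.graph.Adj z' x') (hx'x : X.graph.Adj x' x) (hxz' : δ x z' = 2) (hzx' : δ z x' = 2)
    {y : X.V} (hy : X.SideOf x' z' y) : X.SideOf x z y := by
  by_contra hyz
  unfold SideOf at hy hyz
  have := X.dist_eq_dist_add_one_of_adj y hxz
  have := X.dist_eq_dist_add_one_of_adj y hzz'
  have := X.dist_eq_dist_add_one_of_adj y hz'x'
  have := X.dist_eq_dist_add_one_of_adj y hx'x
  have : δ x z = 1 := dist_eq_one_iff_adj.2 hxz
  have : δ z x = 1 := dist_eq_one_iff_adj.2 hxz.symm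
  have : δ z z' = 1 := dist_eq_one_iff_adj.2 hzz'
  have : δ x' z' = 1 := dist_eq_one_iff_adj.2 hz'x'.symm
  have : δ x' x = 1 := dist_eq_one_iff_adj.2 hx'x
  have : δ x x' = 1 := dist_eq_one_iff_adj.2 hx'x.symm
  -- `z` and `x'` are both medians of `y`, `x`, `z'`
  obtain ⟨m, -, hm⟩ := X.median y x z'
  have hz : z = m := hm z ⟨by omega, by omega, by omega⟩
  have hx' : x' = m := hm x' ⟨by omega, by omega, by omega⟩
  simp [hz, hx'] at hzx'

theorem exists_square_of_sideOf {a b x z : X.V} (hab : X.graph.Adj a b) (hxz : X.graph.Adj x z)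
    (hx : X.SideOf a b x) (hz : X.SideOf b a z) (hxa : x ≠ a) :
    ∃ x' z', X.graph.Adj z z' ∧ X.graph.Adj z' x' ∧ X.graph.Adj x' x ∧ δ x z' = 2 ∧
      δ z x' = 2 ∧ X.SideOf a b x' ∧ X.SideOf b a z' ∧ δ x' a + 1 = δ x a := by
  obtain ⟨x', hxx', hx'a⟩ := X.conn.exists_adj_dist_add_one_eq hxa
  have hxb := hx.dist_eq hab
  have hza := hz.dist_eq hab.symm
  have := X.conn.dist_le_dist_add_one_of_adj hxz b
  have := X.conn.dist_le_dist_add_one_of_adj hxz.symm a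
  have := X.conn.dist_le_dist_add_one_of_adj hxx' b
  have := X.conn.dist_le_dist_add_one_of_adj hxz.symm x'
  have : δ x x' = 1 := dist_eq_one_iff_adj.2 hxx'
  have : δ x' b ≤ δ x' a + δ a b := X.conn.dist_triangle
  have : δ z a ≤ δ z x' + δ x' a := X.conn.dist_triangle
  have : δ a b = 1 := dist_eq_one_iff_adj.2 hab
  have hzx' : δ z x' = 2 := by omega
  obtain ⟨z', hzz', hz'x', hz'b⟩ := X.exists_adj_adj_dist_add_one_eq hzx' (p := b) (by omega)
  have := X.conn.dist_le_dist_add_one_of_adj hzz' a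
  have := X.conn.dist_le_dist_add_one_of_adj hxz z'
  have : δ x b ≤ δ x z' + δ z' b := X.conn.dist_triangle
  have : δ z z' = 1 := dist_eq_one_iff_adj.2 hzz'
  refine ⟨x', z', hzz', hz'x', hxx'.symm, by omega, hzx', ?_, ?_, hx'a⟩ <;> unfold SideOf <;> omega

theorem sideOf_of_dual_edge {a b x z : X.V} (hab : X.graph.Adj a b) (hxz : X.graph.Adj x z)
    (hx : X.SideOf a b x) (hz : X.SideOf b a z) {y : X.V} (hy : X.SideOf a b y) :
    X.SideOf x z y := by
  obtain ⟨n, hn⟩ : ∃ n, δ x a = n := ⟨_, rfl⟩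
  induction n generalizing x z with
  | zero =>
    have := X.conn.dist_le_dist_add_one_of_adj hxz.symm a
    have := hz.dist_eq hab.symm
    obtain rfl := X.conn.dist_eq_zero_iff.1 hn
    obtain rfl := X.conn.dist_eq_zero_iff.1 (by omega : δ z b = 0)
    exact hy
  | succ n ih =>
    obtain ⟨x', z', hzz', hz'x', hx'x, hxz', hzx', hx', hz', hx'a⟩ :=
      X.exists_square_of_sideOf hab hxz hx hz (by rintro rfl; simp at hn)
    exact X.sideOf_of_square hxz hzz' hz'x' hx'x hxz' hzx' (ih hz'x'.symm hx' hz' (by omega))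

theorem sideOf_of_mem_interval {a b x y z : X.V} (hab : X.graph.Adj a b) (hx : X.SideOf a b x)
    (hy : X.SideOf a b y) (hz : z ∈ X.Interval x y) : X.SideOf a b z := by
  obtain ⟨n, hn⟩ : ∃ n, δ x z = n := ⟨_, rfl⟩
  induction n generalizing z with
  | zero =>
    obtain rfl := X.conn.dist_eq_zero_iff.1 hn
    exact hx
  | succ n ih =>
    have hxz : δ x z + δ z y = δ x y := hz
    obtain ⟨p, hzp, hpx⟩ := X.conn.exists_adj_dist_add_one_eq (u := z) (w := x)
      (by rintro rfl; simp at hn)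
    rw [dist_comm (u := p), dist_comm (u := z)] at hpx
    have := X.conn.dist_le_dist_add_one_of_adj hzp.symm y
    have : δ x y ≤ δ x p + δ p y := X.conn.dist_triangle
    have hp : X.SideOf a b p := ih (show δ x p + δ p y = δ x y by omega) (by omega)
    refine (X.sideOf_or_sideOf hab z).resolve_right fun hz' => ?_
    have : δ y p < δ y z := X.sideOf_of_dual_edge hab hzp.symm hp hz' hy
    rw [dist_comm (u := y), dist_comm (u := y)] at this
    omega

theorem dist_eq_add_of_nearest {a b v x₀ y : X.V} (hab : X.graph.Adj a b)
    (hx₀ : X.SideOf b a x₀) (hmin : ∀ w, X.SideOf b a w → δ v x₀ ≤ δ v w)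
    (hy : X.SideOf b a y) : δ v y = δ v x₀ + δ x₀ y := by
  obtain ⟨m, ⟨hvx₀, hx₀y, hvy⟩, -⟩ := X.median v x₀ y
  have := hmin m (X.sideOf_of_mem_interval hab.symm hx₀ hy hx₀y)
  have : δ x₀ m = 0 := by rw [dist_comm]; omega
  omega

theorem sideOf_of_nearest {a b v v' x₀ y : X.V} (hab : X.graph.Adj a b)
    (hx₀ : X.SideOf b a x₀) (hmin : ∀ w, X.SideOf b a w → δ v x₀ ≤ δ v w)
    (hv' : δ v' x₀ + 1 = δ v x₀) (hy : X.SideOf b a y) : X.SideOf v' v y := by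
  have := X.dist_eq_add_of_nearest hab hx₀ hmin hy
  have : δ v' y ≤ δ v' x₀ + δ x₀ y := X.conn.dist_triangle
  show δ y v' < δ y v
  rw [dist_comm (u := y), dist_comm (u := y)]
  omega

theorem sideOf_of_dual_edge_of_subset {a b v v' u w : X.V} (hab : X.graph.Adj a b)
    (hv : X.SideOf a b v) (hv' : X.SideOf a b v')
    (hfar : ∀ y, X.SideOf b a y → X.SideOf v' v y) (huw : X.graph.Adj u w)
    (hu : X.SideOf a b u) (hw : X.SideOf b a w) : X.SideOf v' v u ∧ X.SideOf v' v w := by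
  refine ⟨?_, hfar w hw⟩
  have := (X.sideOf_of_dual_edge hab huw hu hw hv).dist_eq huw
  have := (X.sideOf_of_dual_edge hab huw hu hw hv').dist_eq huw
  have hw' : δ w v' < δ w v := hfar w hw
  show δ u v' < δ u v
  rw [dist_comm (u := w), dist_comm (u := w)] at hw'
  rw [dist_comm (u := u), dist_comm (u := u)]
  omega

theorem exists_nearest_sideOf {a b : X.V} (hab : a ≠ b) (v : X.V) :
    ∃ x₀, X.SideOf b a x₀ ∧ (∀ y, X.SideOf b a y → δ v x₀ ≤ δ v y) ∧
      X.hDist v a b = δ v x₀ - 1 := by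
  obtain ⟨x₀, hx₀, hx₀v⟩ := Nat.sInf_mem
    (⟨_, b, sideOf_left hab.symm, rfl⟩ : {n | ∃ x, X.SideOf b a x ∧ δ v x = n}.Nonempty)
  exact ⟨x₀, hx₀, fun y hy => hx₀v ▸ Nat.sInf_le ⟨y, hy, rfl⟩, by rw [hDist, hx₀v]⟩

theorem hDist_eq_zero_of_adj {v w : X.V} (h : X.graph.Adj v w) : X.hDist v v w = 0 :=
  Nat.sub_eq_zero_of_le (Nat.sInf_le ⟨w, sideOf_left h.ne.symm, dist_eq_one_iff_adj.2 h⟩)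

end

/-- **Lemma 4.5 of the paper**: if `X` is a CAT(0) cube complex, `ṽ` a vertex
and `H` a hyperplane (dual to the edge `(a,b)`, with `ṽ` on the `a`-side)
with `d(ṽ, H) ≥ 3/2` (i.e. `hDist ṽ a b ≥ 1`), then there is a hyperplane
`H'` (dual to an edge `(a',b')`, with `ṽ` on the `a'`-side) with
`d(ṽ, H') = 1/2` which separates `ṽ` from `H`: `ṽ` lies in one halfspace of
`H'` and the whole hyperplane `H` (every edge dual to it) lies in the other. -/
theorem exists_separating_hyperplane_near_vertex (X : CCC) (v a b : X.V)
    (hab : X.graph.Adj a b) (hside : X.SideOf a b v) (hd : 1 ≤ X.hDist v a b) :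
    ∃ a' b' : X.V, X.graph.Adj a' b' ∧ X.SideOf a' b' v ∧ X.hDist v a' b' = 0 ∧
      ∀ u w : X.V, X.UDual u w a b → X.SideOf b' a' u ∧ X.SideOf b' a' w := by
  obtain ⟨x₀, hx₀, hmin, hdist⟩ := X.exists_nearest_sideOf hab.ne v
  obtain ⟨v', hvv', hv'x₀⟩ := X.conn.exists_adj_dist_add_one_eq (u := v) (w := x₀)
    (by rintro rfl; simp at hdist; omega)
  have hv' : X.SideOf a b v' := (X.sideOf_or_sideOf hab v').resolve_right fun h => by
    have := hmin v' h
    rw [dist_eq_one_iff_adj.2 hvv'] at this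
    omega
  have hfar : ∀ y, X.SideOf b a y → X.SideOf v' v y := fun _ =>
    X.sideOf_of_nearest hab hx₀ hmin hv'x₀
  have hcross : ∀ u w, X.graph.Adj u w → X.graph.dist u a + 1 = X.graph.dist u b →
      X.graph.dist w b + 1 = X.graph.dist w a →
      X.SideOf v' v u ∧ X.SideOf v' v w := fun u w huw hu hw =>
    X.sideOf_of_dual_edge_of_subset hab hside hv' hfar huw (Nat.lt_of_succ_le hu.le)
      (Nat.lt_of_succ_le hw.le)
  refine ⟨v, v', hvv', sideOf_left hvv'.ne, hDist_eq_zero_of_adj hvv', ?_⟩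
  rintro u w (⟨huw, -, hu, hw⟩ | ⟨huw, -, hu, hw⟩)
  · exact hcross u w huw hu hw
  · exact (hcross w u huw.symm hw hu).symm

end CCC
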